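/- Let p₁,…,p_m be causal access paths with latency bounds t₁,…,t_m, and let r₀, r₁, …, r_m be replication schemes such that for each i ∈ {1,…,m}, r_i extends r_{i−1}, r_i is latency-robust for p_i, and h(p_i, r_i) ≤ t_i. Then the final scheme r_m satisfies h(p_i, r_m) ≤ t_i for every i ∈ {1,…,m} (i.e., the greedy latency-bound replication algorithm returns a latency-feasible solution whenever every update step is latency-robust and latency-feasible for its path). -/
import Mathlib


/-- The access function ρ along a causal access path `p` (given by its
sequence of objects indexed by ℕ): the root is accessed at its original
server `d (p 0)`, and each subsequent object is accessed at the current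
server if that server holds a copy of it, and at its original server
otherwise. -/
def rho {V S : Type*} [DecidableEq S] (d : V → S) (r : V → Finset S)
    (p : ℕ → V) : ℕ → S
  | 0 => d (p 0)
  | i + 1 => if rho d r p i ∈ r (p (i + 1)) then rho d r p i else d (p (i + 1))

/-- The latency `h(p, r)` of a path of length `n`: the number of
consecutive accesses occurring on different servers. -/
def latency {V S : Type*} [DecidableEq S] (d : V → S) (r : V → Finset S)
    (p : ℕ → V) (n : ℕ) : ℕ :=
  ((Finset.range (n - 1)).filter fun i => rho d r p i ≠ rho d r p (i + 1)).card

/-- `⟨p j, …, p k⟩` is a server-local subpath of the path `p` of length `n`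
under the scheme `r`: a maximal contiguous block on which ρ is constant. -/
def IsLocalSubpath {V S : Type*} [DecidableEq S] (d : V → S) (r : V → Finset S)
    (p : ℕ → V) (n j k : ℕ) : Prop :=
  j ≤ k ∧ k < n ∧
  (∀ i, j ≤ i → i < k → rho d r p i = rho d r p (i + 1)) ∧
  (j = 0 ∨ rho d r p (j - 1) ≠ rho d r p j) ∧
  (k = n - 1 ∨ rho d r p k ≠ rho d r p (k + 1))

/-- `r` is latency-robust for the path `p` of length `n`. -/
def Robust {V S : Type*} [DecidableEq S] (d : V → S) (r : V → Finset S)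
    (p : ℕ → V) (n : ℕ) : Prop :=
  ∀ j k, IsLocalSubpath d r p n j k →
    ∀ x y, j ≤ x → x < y → y ≤ k → d (p x) ∈ r (p y)

/-- `r'` extends `r`. -/
def Extends {V S : Type*} (r r' : V → Finset S) : Prop := ∀ v, r v ⊆ r' v

/-- `r'` is a single-object extension of `r`. -/
def SingleExt {V S : Type*} [DecidableEq S] (r r' : V → Finset S) : Prop :=
  ∃ w s, s ∉ r w ∧ r' w = insert s (r w) ∧ ∀ v, v ≠ w → r' v = r v

lemma rho_succ {V S : Type*} [DecidableEq S] (d : V → S) (r : V → Finset S)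
    (p : ℕ → V) (i : ℕ) :
    rho d r p (i+1) = if rho d r p i ∈ r (p (i + 1)) then rho d r p i else d (p (i + 1)) := rfl

lemma robust_mem {V S : Type*} [DecidableEq S] (d : V → S) (r : V → Finset S)
    (p : ℕ → V) (n : ℕ) (hrob : Robust d r p n) :
    ∀ x y, x < y → y < n → (∀ l, x ≤ l → l < y → rho d r p l = rho d r p (l+1)) →
      d (p x) ∈ r (p y) := by
  classical
  intro x y hxy hyn hconst
  have hex : ∃ m, y ≤ m ∧ (m = n - 1 ∨ rho d r p m ≠ rho d r p (m+1)) :=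
    ⟨n - 1, by omega, Or.inl rfl⟩
  set k := Nat.find hex with hkdef
  have hk := Nat.find_spec hex
  have hkmin := fun m hm => Nat.find_min hex (m := m) hm
  have hkle : k ≤ n - 1 := Nat.find_le ⟨by omega, Or.inl rfl⟩
  have hexQ : ∃ b, x - b = 0 ∨ rho d r p (x - b - 1) ≠ rho d r p (x - b) :=
    ⟨x, Or.inl (by omega)⟩
  set b := Nat.find hexQ with hbdef
  have hb := Nat.find_spec hexQ
  have hbmin := fun cc hcc => Nat.find_min hexQ (m := cc) hcc
  set j := x - b with hj
  have hsub : IsLocalSubpath d r p n j k := by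
    refine ⟨by omega, by omega, ?_, ?_, hk.2⟩
    · intro l hl1 hl2
      rcases lt_or_ge l x with hlx | hlx
      · have hcb : x - l - 1 < b := by omega
        have := hbmin _ hcb
        push_neg at this
        have h1 : x - (x - l - 1) - 1 = l := by omega
        have h2 : x - (x - l - 1) = l + 1 := by omega
        rw [h1, h2] at this
        exact this.2
      · rcases lt_or_ge l y with hly | hly
        · exact hconst l hlx hly
        · have := hkmin l hl2
          push_neg at this
          exact (this hly).2
    · rcases hb with h | h
      · exact Or.inl h
      · exact Or.inr h
  exact hrob j k hsub x y (by omega) hxy (by omega)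

lemma latency_mono {V S : Type*} [DecidableEq S] (d : V → S) (r r' : V → Finset S)
    (p : ℕ → V) (n : ℕ)
    (hd' : ∀ v, d v ∈ r' v) (hext : Extends r r') (hrob : Robust d r p n) :
    latency d r' p n ≤ latency d r p n := by
  classical
  rcases Nat.eq_zero_or_pos n with h0 | hpos
  · simp [latency, h0]
  set c : (V → Finset S) → ℕ → ℕ :=
    fun rr i => ((Finset.range i).filter fun l => rho d rr p l ≠ rho d rr p (l+1)).card with hc
  have hcsucc : ∀ rr i, c rr (i+1) =
      c rr i + (if rho d rr p i ≠ rho d rr p (i+1) then 1 else 0) := by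
    intro rr i
    simp only [hc, Finset.card_filter, Finset.sum_range_succ]
  set A : ℕ → Prop := fun i => rho d r' p i = rho d r p i ∨
    ∃ x, x ≤ i ∧ rho d r' p i = d (p x) ∧
      ∀ l, x ≤ l → l < i → rho d r p l = rho d r p (l+1) with hA
  have key : ∀ i, i < n → (A i ∧ c r' i ≤ c r i) ∨ (c r' i + 1 ≤ c r i) := by
    intro i
    induction i with
    | zero =>
      intro _
      exact Or.inl ⟨Or.inl rfl, le_refl _⟩
    | succ i ih =>
      intro hin
      have hi : i < n := by omega
      by_cases hch : rho d r p i = rho d r p (i+1)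
      · have hcr : c r (i+1) = c r i := by rw [hcsucc, if_neg (by simpa using hch)]; omega
        rcases ih hi with ⟨hAi, hci⟩ | hci
        · rcases hAi with heq | ⟨x, hxle, hxe, hxconst⟩
          · have h1 : rho d r p i ∈ r' (p (i+1)) := by
              by_cases hmem : rho d r p i ∈ r (p (i+1))
              · exact hext _ hmem
              · have h2 : rho d r p (i+1) = d (p (i+1)) := by
                  rw [rho_succ, if_neg hmem]
                rw [hch, h2]
                exact hd' _
            have h2 : rho d r' p (i+1) = rho d r p (i+1) := by
              rw [rho_succ, heq, if_pos h1]
              exact hch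
            refine Or.inl ⟨Or.inl h2, ?_⟩
            have : rho d r' p i = rho d r' p (i+1) := by rw [heq, h2]; exact hch
            rw [hcsucc, if_neg (by simpa using this), hcr]
            omega
          · have hmem : d (p x) ∈ r (p (i+1)) := by
              refine robust_mem d r p n hrob x (i+1) (by omega) (by omega) ?_
              intro l hl1 hl2
              rcases lt_or_ge l i with h | h
              · exact hxconst l hl1 h
              · have : l = i := by omega
                rw [this]; exact hch
            have h2 : rho d r' p (i+1) = rho d r' p i := by
              rw [rho_succ, if_pos (by rw [hxe]; exact hext _ hmem)]
            refine Or.inl ⟨Or.inr ⟨x, by omega, by rw [h2]; exact hxe, ?_⟩, ?_⟩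
            · intro l hl1 hl2
              rcases lt_or_ge l i with h | h
              · exact hxconst l hl1 h
              · have : l = i := by omega
                rw [this]; exact hch
            · rw [hcsucc, if_neg (by simpa using h2.symm), hcr]
              omega
        · by_cases h2 : rho d r' p (i+1) = rho d r' p i
          · have hcr' : c r' (i+1) = c r' i := by
              rw [hcsucc, if_neg (by simpa using h2.symm)]; omega
            by_cases hA1 : A (i+1)
            · exact Or.inl ⟨hA1, by omega⟩
            · exact Or.inr (by omega)
          · have h3 : rho d r' p (i+1) = d (p (i+1)) := by
              by_cases hmem : rho d r' p i ∈ r' (p (i+1))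
              · exact absurd (by rw [rho_succ, if_pos hmem]) h2
              · rw [rho_succ, if_neg hmem]
            refine Or.inl ⟨Or.inr ⟨i+1, le_refl _, h3, by omega⟩, ?_⟩
            rw [hcsucc, hcr]
            split <;> omega
      · have hcr : c r (i+1) = c r i + 1 := by rw [hcsucc, if_pos hch]
        have hc0 : c r' i ≤ c r i := by rcases ih hi with ⟨_, h⟩ | h <;> omega
        by_cases h2 : rho d r' p (i+1) = rho d r' p i
        · have hcr' : c r' (i+1) = c r' i := by
            rw [hcsucc, if_neg (by simpa using h2.symm)]; omega
          by_cases hA1 : A (i+1)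
          · exact Or.inl ⟨hA1, by omega⟩
          · exact Or.inr (by omega)
        · have h3 : rho d r' p (i+1) = d (p (i+1)) := by
            by_cases hmem : rho d r' p i ∈ r' (p (i+1))
            · exact absurd (by rw [rho_succ, if_pos hmem]) h2
            · rw [rho_succ, if_neg hmem]
          refine Or.inl ⟨Or.inr ⟨i+1, le_refl _, h3, by omega⟩, ?_⟩
          rw [hcsucc, hcr]
          split <;> omega
  have hfin := key (n-1) (by omega)
  have h1 : latency d r' p n = c r' (n-1) := rfl
  have h2 : latency d r p n = c r (n-1) := rfl
  rw [h1, h2]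
  rcases hfin with ⟨_, h⟩ | h <;> omega

/-- Correctness of the greedy latency-bound replication
algorithm: if each update step `r_{i-1} → r_i` extends the previous scheme,
is latency-robust for the path `p_i` it processes, and satisfies the latency
bound `t_i` on `p_i`, then the final scheme `r_m` satisfies all the latency
bounds. -/
theorem greedy_algorithm_latency_feasible
    {V S : Type*} [Fintype V] [Fintype S] [DecidableEq V] [DecidableEq S]
    (d : V → S) (m : ℕ)
    (p : Fin m → ℕ → V) (n : Fin m → ℕ) (hn : ∀ i, 1 ≤ n i)
    (t : Fin m → ℕ)
    (r : Fin (m + 1) → V → Finset S)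
    (hr : ∀ j v, d v ∈ r j v)
    (hext : ∀ i : Fin m, Extends (r i.castSucc) (r i.succ))
    (hrob : ∀ i : Fin m, Robust d (r i.succ) (p i) (n i))
    (hlat : ∀ i : Fin m, latency d (r i.succ) (p i) (n i) ≤ t i) :
    ∀ i : Fin m, latency d (r (Fin.last m)) (p i) (n i) ≤ t i := by
  have chain : ∀ b : ℕ, (hb : b ≤ m) → ∀ a : ℕ, (ha : a ≤ b) →
      Extends (r ⟨a, by omega⟩) (r ⟨b, by omega⟩) := by
    intro b
    induction b with
    | zero =>
      intro _ a ha
      have : a = 0 := by omega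
      subst this
      exact fun v => subset_rfl
    | succ b ihb =>
      intro hb a ha
      rcases Nat.eq_or_lt_of_le ha with h | h
      · subst h
        exact fun v => subset_rfl
      · have h1 := ihb (by omega) a (by omega)
        have h2 := hext ⟨b, by omega⟩
        exact fun v => (h1 v).trans (h2 v)
  intro i
  have h1 : Extends (r i.succ) (r (Fin.last m)) := by
    have := chain m (le_refl m) (i.val + 1) (by omega)
    exact this
  exact le_trans
    (latency_mono d (r i.succ) (r (Fin.last m)) (p i) (n i) (hr _) h1 (hrob i))
    (hlat i)
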